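/- Under the hypotheses of the Lie-derivative transfer lemma (dF_x ξ(x) = σ(x) θ(F(x)), σ > 0, f = g ∘ F), a point x₁ is a generalized maximum of f with respect to ξ (i.e., L_ξ f(x₁) = 0 and L_ξ² f(x₁) < 0) if and only if F(x₁) is a generalized maximum of g with respect to θ. -/

import Mathlib

/-- The first-order Lie (directional) derivative of `f` along the vector field `ξ`. -/
noncomputable def lieDeriv {n : ℕ} (f : EuclideanSpace ℝ (Fin n) → ℝ)
    (ξ : EuclideanSpace ℝ (Fin n) → EuclideanSpace ℝ (Fin n)) :
    EuclideanSpace ℝ (Fin n) → ℝ :=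
  fun x => fderiv ℝ f x (ξ x)

/-- `x` is a generalized maximum of `f` with respect to `ξ`:
`L_ξ f (x) = 0` and `L_ξ² f (x) < 0`. -/
def IsGenMax {n : ℕ} (f : EuclideanSpace ℝ (Fin n) → ℝ)
    (ξ : EuclideanSpace ℝ (Fin n) → EuclideanSpace ℝ (Fin n))
    (x : EuclideanSpace ℝ (Fin n)) : Prop :=
  lieDeriv f ξ x = 0 ∧ lieDeriv (lieDeriv f ξ) ξ x < 0

/-- Under the hypotheses of the Lie-derivative transfer lemma
(`DF(x) ξ(x) = σ(x) θ(F x)` with `σ > 0`, `f = g ∘ F`), `x₁` is a generalized maximum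
of `f` w.r.t. `ξ` iff `F x₁` is a generalized maximum of `g` w.r.t. `θ`. -/
theorem genMax_transfer {n : ℕ}
    (F : EuclideanSpace ℝ (Fin n) → EuclideanSpace ℝ (Fin n))
    (Finv : EuclideanSpace ℝ (Fin n) → EuclideanSpace ℝ (Fin n))
    (hF : ContDiff ℝ 2 F) (hFinv : ContDiff ℝ 2 Finv)
    (hleft : Function.LeftInverse Finv F) (hright : Function.RightInverse Finv F)
    (ξ θ : EuclideanSpace ℝ (Fin n) → EuclideanSpace ℝ (Fin n))
    (hξ : ContDiff ℝ (⊤ : ℕ∞) ξ) (hθ : ContDiff ℝ (⊤ : ℕ∞) θ)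
    (σ : EuclideanSpace ℝ (Fin n) → ℝ) (hσ : ContDiff ℝ (⊤ : ℕ∞) σ) (hσ0 : ∀ x, 0 < σ x)
    (hrel : ∀ x, fderiv ℝ F x (ξ x) = σ x • θ (F x))
    (g : EuclideanSpace ℝ (Fin n) → ℝ) (hg : ContDiff ℝ (⊤ : ℕ∞) g)
    (f : EuclideanSpace ℝ (Fin n) → ℝ) (hf : f = g ∘ F)
    (x₁ : EuclideanSpace ℝ (Fin n)) :
    IsGenMax f ξ x₁ ↔ IsGenMax g θ (F x₁) := by
  subst hf
  have hFd : Differentiable ℝ F := hF.differentiable (by norm_num)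
  have hgd : Differentiable ℝ g := hg.differentiable (by simp)
  have hh : ContDiff ℝ (⊤ : ℕ∞) (lieDeriv g θ) := (hg.fderiv_right (by simp)).clm_apply hθ
  have hhd : Differentiable ℝ (lieDeriv g θ) := hh.differentiable (by simp)
  -- first key identity: L_ξ (g ∘ F) = σ · (L_θ g) ∘ F
  have key1 : lieDeriv (g ∘ F) ξ = fun x => σ x * lieDeriv g θ (F x) := by
    funext x
    have h1 : fderiv ℝ (g ∘ F) x = (fderiv ℝ g (F x)).comp (fderiv ℝ F x) :=
      fderiv_comp x (hgd (F x)) (hFd x)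
    simp only [lieDeriv, h1, ContinuousLinearMap.comp_apply, hrel x, map_smul,
      smul_eq_mul]
  -- second key identity
  have key2 : ∀ x, lieDeriv (lieDeriv (g ∘ F) ξ) ξ x
      = σ x * (σ x * lieDeriv (lieDeriv g θ) θ (F x))
        + lieDeriv g θ (F x) * lieDeriv σ ξ x := by
    intro x
    have hcomp : fderiv ℝ (fun y => lieDeriv g θ (F y)) x
        = (fderiv ℝ (lieDeriv g θ) (F x)).comp (fderiv ℝ F x) :=
      fderiv_comp x (hhd (F x)) (hFd x)
    have hmul : fderiv ℝ (fun y => σ y * lieDeriv g θ (F y)) x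
        = σ x • fderiv ℝ (fun y => lieDeriv g θ (F y)) x
          + lieDeriv g θ (F x) • fderiv ℝ σ x :=
      fderiv_mul (hσ.differentiable (by simp) x) ((hhd (F x)).comp x (hFd x))
    show fderiv ℝ (lieDeriv (g ∘ F) ξ) x (ξ x) = _
    rw [key1, hmul]
    simp only [ContinuousLinearMap.add_apply, ContinuousLinearMap.smul_apply,
      hcomp, ContinuousLinearMap.comp_apply, hrel x, map_smul, smul_eq_mul]
    simp only [lieDeriv]
  have hσ1 : σ x₁ ≠ 0 := (hσ0 x₁).ne'
  constructor
  · rintro ⟨h1, h2⟩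
    rw [key1] at h1
    have hg1 : lieDeriv g θ (F x₁) = 0 := by
      rcases mul_eq_zero.mp h1 with h | h
      · exact absurd h hσ1
      · exact h
    refine ⟨hg1, ?_⟩
    rw [key2 x₁, hg1] at h2
    simp only [zero_mul, add_zero] at h2
    nlinarith [hσ0 x₁, mul_pos (hσ0 x₁) (hσ0 x₁)]
  · rintro ⟨h1, h2⟩
    have hf1 : lieDeriv (g ∘ F) ξ x₁ = 0 := by rw [key1]; simp [h1]
    refine ⟨hf1, ?_⟩
    rw [key2 x₁, h1]
    simp only [zero_mul, add_zero]
    nlinarith [hσ0 x₁, mul_pos (hσ0 x₁) (hσ0 x₁)]
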